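/- Let X and A be nonempty finite sets, let P : X × A → (X → ℝ) be a transition kernel (P(x'|x,a) ≥ 0 and Σ_{x'} P(x'|x,a) = 1), and let r : X × A → ℝ with 0 ≤ r(x,a) ≤ 1. Let π and π' be policies with induced transition matrices P^π, P^{π'} and induced rewards r_π, r_{π'} (where P^π(x,x') = Σ_a π(a|x)·P(x'|x,a) and r_π(x) = Σ_a π(a|x)·r(x,a)). Let τ ≥ 1 and suppose both P^π and P^{π'} satisfy the contraction condition: for any two probability distributions μ, μ' on X, the ℓ1-distance between μP^π and μ'P^π (respectively μP^{π'} and μ'P^{π'}) is at most exp(−1/τ) times the ℓ1-distance between μ and μ'. Let μ_π and μ_{π'} be stationary distributions of P^π and P^{π'} respectively, set λ_π = Σ_x μ_π(x)·r_π(x) and λ_{π'} = Σ_x μ_{π'}(x)·r_{π'}(x), and define V_π(x) = Σ_{t=0}^∞ (((P^π)^t r_π)(x) − λ_π) and V_{π'}(x) = Σ_{t=0}^∞ (((P^{π'})^t r_{π'})(x) − λ_{π'}) (both series converge absolutely under the contraction condition). Let K be an integer with K ≥ 6τ, set N = ⌈4τ·log₂ K⌉ and Δ = max_{x∈X} Σ_{a∈A}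 |π(a|x) − π'(a|x)|. Then for every x ∈ X: |V_π(x) − V_{π'}(x)| ≤ (N² + N)·Δ + N·|λ_π − λ_{π'}| + 2/K³. -/

import Mathlib

/-!
Split both value series after `N` terms. One step of the two chains moves every row
distribution by at most `Δ` in `ℓ¹` and every reward by at most `Δ`, while a stochastic
matrix does not enlarge sup-norm errors; hence `|(Pπ^t rπ)(x) - (Pπ'^t rπ')(x)| ≤ (t + 1) Δ`
and the first `N` terms differ by at most `N² Δ + N |λ - λ'|`. The contraction drives the rows
of `Pπ^t` to the stationary distribution geometrically, `|(Pπ^t rπ)(x) - λ| ≤ 2 e^{-t/τ}`,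
so each tail is at most `2 e^{-N/τ} / (1 - e^{-1/τ})`, which is `≤ 1/K³` for `K ≥ 6τ` and
`N ≥ 4τ log₂ K`.
-/

open Finset Matrix

section StochasticMatrix

variable {ι : Type*} [Fintype ι]

lemma abs_sum_mul_le_sum_abs {w v : ι → ℝ} (hv : ∀ i, |v i| ≤ 1) :
    |∑ i, w i * v i| ≤ ∑ i, |w i| :=
  (abs_sum_le_sum_abs _ _).trans <| sum_le_sum fun i _ => by
    rw [abs_mul]
    exact mul_le_of_le_one_right (abs_nonneg _) (hv i)

lemma sum_abs_sub_le_two {μ ν : ι → ℝ} (hμ : μ ∈ stdSimplex ℝ ι)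
    (hν : ν ∈ stdSimplex ℝ ι) : ∑ i, |μ i - ν i| ≤ 2 :=
  calc ∑ i, |μ i - ν i| ≤ ∑ i, (μ i + ν i) := sum_le_sum fun i _ =>
        (abs_sub _ _).trans_eq (by rw [abs_of_nonneg (hμ.1 i), abs_of_nonneg (hν.1 i)])
    _ = 2 := by rw [sum_add_distrib, hμ.2, hν.2]; norm_num

variable {X : Type*} [Fintype X]

def ContractsL1 (M : Matrix X X ℝ) (q : ℝ) : Prop :=
  ∀ μ ∈ stdSimplex ℝ X, ∀ ν ∈ stdSimplex ℝ X,
    ∑ y, |((μ - ν) ᵥ* M) y| ≤ q * ∑ x, |(μ - ν) x|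

variable [DecidableEq X] {M M' : Matrix X X ℝ}

lemma mem_rowStochastic_iff_row_mem_stdSimplex :
    M ∈ rowStochastic ℝ X ↔ ∀ x, M x ∈ stdSimplex ℝ X := by
  simp only [mem_rowStochastic_iff_sum, stdSimplex, Set.mem_ofPred_eq, forall_and]

lemma abs_mulVec_le (hM : M ∈ rowStochastic ℝ X) {v : X → ℝ} {c : ℝ}
    (hv : ∀ y, |v y| ≤ c) (x : X) : |(M *ᵥ v) x| ≤ c :=
  calc |(M *ᵥ v) x| ≤ ∑ y, M x y * |v y| := (abs_sum_le_sum_abs _ _).trans_eq <| by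
        simp_rw [abs_mul, abs_of_nonneg (nonneg_of_mem_rowStochastic hM)]
    _ ≤ ∑ y, M x y * c := sum_le_sum fun y _ =>
        mul_le_mul_of_nonneg_left (hv y) (nonneg_of_mem_rowStochastic hM)
    _ = c := by rw [← sum_mul, sum_row_of_mem_rowStochastic hM, one_mul]

variable {q : ℝ} {μ : X → ℝ}

lemma sum_abs_pow_sub_le (hM : M ∈ rowStochastic ℝ X) (hq : 0 ≤ q) (hc : ContractsL1 M q)
    (hμ : μ ∈ stdSimplex ℝ X) (hstat : μ ᵥ* M = μ) (x : X) (t : ℕ) :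
    ∑ y, |(M ^ t) x y - μ y| ≤ 2 * q ^ t := by
  have hrow (t : ℕ) := mem_rowStochastic_iff_row_mem_stdSimplex.1 (pow_mem hM t) x
  induction t with
  | zero => simpa using sum_abs_sub_le_two (hrow 0) hμ
  | succ t ih =>
    have hstep : (M ^ (t + 1)) x - μ = ((M ^ t) x - μ) ᵥ* M := by
      rw [sub_vecMul, hstat, pow_succ]
      rfl
    calc ∑ y, |(M ^ (t + 1)) x y - μ y| = ∑ y, |(((M ^ t) x - μ) ᵥ* M) y| := by
          simp_rw [← hstep, Pi.sub_apply]
      _ ≤ q * ∑ y, |((M ^ t) x - μ) y| := hc _ (hrow t) _ hμ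
      _ ≤ q * (2 * q ^ t) := mul_le_mul_of_nonneg_left ih hq
      _ = 2 * q ^ (t + 1) := by ring

lemma abs_pow_mulVec_sub_dotProduct_le (hM : M ∈ rowStochastic ℝ X) (hq : 0 ≤ q)
    (hc : ContractsL1 M q) (hμ : μ ∈ stdSimplex ℝ X) (hstat : μ ᵥ* M = μ) {v : X → ℝ}
    (hv : ∀ y, |v y| ≤ 1) (x : X) (t : ℕ) :
    |(M ^ t *ᵥ v) x - μ ⬝ᵥ v| ≤ 2 * q ^ t := by
  have hexp : (M ^ t *ᵥ v) x - μ ⬝ᵥ v = ∑ y, ((M ^ t) x y - μ y) * v y := by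
    simp only [mulVec, dotProduct, sub_mul, sum_sub_distrib]
  rw [hexp]
  exact (abs_sum_mul_le_sum_abs hv).trans (sum_abs_pow_sub_le hM hq hc hμ hstat x t)

lemma abs_pow_mulVec_sub_pow_mulVec_le (hM : M ∈ rowStochastic ℝ X)
    (hM' : M' ∈ rowStochastic ℝ X) {v v' : X → ℝ} {Δ : ℝ}
    (hrow : ∀ x, ∑ y, |M x y - M' x y| ≤ Δ) (hvd : ∀ x, |v x - v' x| ≤ Δ)
    (hv' : ∀ x, |v' x| ≤ 1) (t : ℕ) (x : X) :
    |(M ^ t *ᵥ v) x - (M' ^ t *ᵥ v') x| ≤ (t + 1) * Δ := by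
  induction t generalizing x with
  | zero => simpa using hvd x
  | succ t ih =>
    set u := M ^ t *ᵥ v
    set u' := M' ^ t *ᵥ v'
    have hsplit :
        M ^ (t + 1) *ᵥ v - M' ^ (t + 1) *ᵥ v' = M *ᵥ (u - u') + (M - M') *ᵥ u' := by
      rw [pow_succ', pow_succ', ← mulVec_mulVec, ← mulVec_mulVec, mulVec_sub, sub_mulVec]
      abel
    have hold : |(M *ᵥ (u - u')) x| ≤ (t + 1) * Δ := abs_mulVec_le hM ih x
    have hnew : |((M - M') *ᵥ u') x| ≤ Δ :=
      (abs_sum_mul_le_sum_abs (abs_mulVec_le (pow_mem hM' t) hv')).trans (hrow x)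
    calc |(M ^ (t + 1) *ᵥ v) x - (M' ^ (t + 1) *ᵥ v') x|
        = |(M *ᵥ (u - u')) x + ((M - M') *ᵥ u') x| := by rw [← Pi.sub_apply, hsplit]; rfl
      _ ≤ (t + 1) * Δ + Δ := (abs_add_le _ _).trans (add_le_add hold hnew)
      _ = (↑(t + 1) + 1) * Δ := by push_cast; ring

end StochasticMatrix

lemma abs_tsum_sub_sum_range_le {f : ℕ → ℝ} {C q : ℝ} (hq0 : 0 ≤ q) (hq1 : q < 1)
    (hf : ∀ t, |f t| ≤ C * q ^ t) (N : ℕ) :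
    |∑' t, f t - ∑ t ∈ range N, f t| ≤ C * q ^ N / (1 - q) := by
  have hsum : Summable f :=
    .of_norm_bounded (f := f) ((summable_geometric_of_lt_one hq0 hq1).mul_left C) hf
  rw [← hsum.sum_add_tsum_nat_add N, add_sub_cancel_left, div_eq_mul_inv]
  refine tsum_of_norm_bounded (f := fun t => f (t + N))
    ((hasSum_geometric_of_lt_one hq0 hq1).mul_left (C * q ^ N)) fun t => ?_
  simpa only [Real.norm_eq_abs, pow_add, mul_comm, mul_left_comm, mul_assoc] using hf (t + N)

section Value

variable {X : Type*} [Fintype X] [DecidableEq X]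

noncomputable def averageRewardValue (M : Matrix X X ℝ) (v : X → ℝ) (g : ℝ) (x : X) : ℝ :=
  ∑' t : ℕ, ((M ^ t *ᵥ v) x - g)

theorem abs_averageRewardValue_sub_le {M M' : Matrix X X ℝ} (hM : M ∈ rowStochastic ℝ X)
    (hM' : M' ∈ rowStochastic ℝ X) {q : ℝ} (hq0 : 0 ≤ q) (hq1 : q < 1)
    (hc : ContractsL1 M q) (hc' : ContractsL1 M' q) {μ μ' : X → ℝ}
    (hμ : μ ∈ stdSimplex ℝ X) (hμ' : μ' ∈ stdSimplex ℝ X)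
    (hstat : μ ᵥ* M = μ) (hstat' : μ' ᵥ* M' = μ') {v v' : X → ℝ}
    (hv : ∀ x, |v x| ≤ 1) (hv' : ∀ x, |v' x| ≤ 1) {Δ : ℝ}
    (hrow : ∀ x, ∑ y, |M x y - M' x y| ≤ Δ) (hvd : ∀ x, |v x - v' x| ≤ Δ)
    (N : ℕ) (x : X) :
    |averageRewardValue M v (μ ⬝ᵥ v) x - averageRewardValue M' v' (μ' ⬝ᵥ v') x|
      ≤ (N : ℝ) ^ 2 * Δ + N * |μ ⬝ᵥ v - μ' ⬝ᵥ v'| + 4 * q ^ N / (1 - q) := by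
  set g := μ ⬝ᵥ v
  set g' := μ' ⬝ᵥ v'
  have hΔ : 0 ≤ Δ := (abs_nonneg _).trans (hvd x)
  have htail := abs_tsum_sub_sum_range_le hq0 hq1
    (abs_pow_mulVec_sub_dotProduct_le hM hq0 hc hμ hstat hv x) N
  have htail' := abs_tsum_sub_sum_range_le hq0 hq1
    (abs_pow_mulVec_sub_dotProduct_le hM' hq0 hc' hμ' hstat' hv' x) N
  set S := ∑ t ∈ range N, ((M ^ t *ᵥ v) x - g)
  set S' := ∑ t ∈ range N, ((M' ^ t *ᵥ v') x - g')
  have hhead : |S - S'| ≤ N * (N * Δ + |g - g'|) := by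
    rw [← sum_sub_distrib]
    refine (abs_sum_le_sum_abs _ _).trans <|
      (sum_le_card_nsmul _ _ ((N : ℝ) * Δ + |g - g'|) fun t ht => ?_).trans_eq
        (by rw [card_range, nsmul_eq_mul])
    calc |((M ^ t *ᵥ v) x - g) - ((M' ^ t *ᵥ v') x - g')|
        ≤ |(M ^ t *ᵥ v) x - (M' ^ t *ᵥ v') x| + |g - g'| := by
          rw [sub_sub_sub_comm]; exact abs_sub _ _
      _ ≤ (t + 1) * Δ + |g - g'| := by
          gcongr; exact abs_pow_mulVec_sub_pow_mulVec_le hM hM' hrow hvd hv' t x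
      _ ≤ N * Δ + |g - g'| := by
          gcongr; exact_mod_cast mem_range.1 ht
  unfold averageRewardValue
  set V := ∑' t, ((M ^ t *ᵥ v) x - g)
  set V' := ∑' t, ((M' ^ t *ᵥ v') x - g')
  calc |V - V'| = |(V - S) - (V' - S') + (S - S')| := by congr 1; ring
    _ ≤ |V - S| + |V' - S'| + |S - S'| :=
        (abs_add_le _ _).trans (add_le_add_left (abs_sub _ _) _)
    _ ≤ 2 * q ^ N / (1 - q) + 2 * q ^ N / (1 - q) + N * (N * Δ + |g - g'|) := by gcongr
    _ = (N : ℝ) ^ 2 * Δ + N * |g - g'| + 4 * q ^ N / (1 - q) := by ring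

end Value

section Policy

variable {X A : Type*} [Fintype A]

def policyMatrix (P : X → A → X → ℝ) (π : X → A → ℝ) : Matrix X X ℝ :=
  Matrix.of fun x y => ∑ a, π x a * P x a y

def policyReward (r : X → A → ℝ) (π : X → A → ℝ) (x : X) : ℝ :=
  ∑ a, π x a * r x a

variable {P : X → A → X → ℝ} {r : X → A → ℝ} {π π' : X → A → ℝ}

lemma policyMatrix_mem_rowStochastic [Fintype X] [DecidableEq X]
    (hP : ∀ x a, P x a ∈ stdSimplex ℝ X) (hπ : ∀ x, π x ∈ stdSimplex ℝ A) :
    policyMatrix P π ∈ rowStochastic ℝ X := by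
  refine mem_rowStochastic_iff_row_mem_stdSimplex.2 fun x => ?_
  convert (convex_stdSimplex ℝ X).sum_mem (fun a _ => (hπ x).1 a) (hπ x).2 fun a _ => hP x a
  ext y
  simp [policyMatrix, Finset.sum_apply]

lemma sum_abs_policyMatrix_sub_le [Fintype X] (hP : ∀ x a, P x a ∈ stdSimplex ℝ X) (x : X) :
    ∑ y, |policyMatrix P π x y - policyMatrix P π' x y| ≤ ∑ a, |π x a - π' x a| :=
  calc ∑ y, |policyMatrix P π x y - policyMatrix P π' x y|
      = ∑ y, |∑ a, (π x a - π' x a) * P x a y| := by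
        simp [policyMatrix, sub_mul, sum_sub_distrib]
    _ ≤ ∑ y, ∑ a, |π x a - π' x a| * P x a y := sum_le_sum fun y _ =>
        (abs_sum_le_sum_abs _ _).trans_eq <| by simp_rw [abs_mul, abs_of_nonneg ((hP x _).1 y)]
    _ = ∑ a, |π x a - π' x a| := by
        rw [sum_comm]; simp_rw [← mul_sum, (hP x _).2, mul_one]

lemma abs_policyReward_le_one (hr : ∀ x a, |r x a| ≤ 1) (hπ : ∀ x, π x ∈ stdSimplex ℝ A)
    (x : X) : |policyReward r π x| ≤ 1 :=
  (abs_sum_mul_le_sum_abs (hr x)).trans_eq <| by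
    simp_rw [abs_of_nonneg ((hπ x).1 _), (hπ x).2]

lemma abs_policyReward_sub_le (hr : ∀ x a, |r x a| ≤ 1) (x : X) :
    |policyReward r π x - policyReward r π' x| ≤ ∑ a, |π x a - π' x a| := by
  simp_rw [policyReward, ← sum_sub_distrib, ← sub_mul]
  exact abs_sum_mul_le_sum_abs (hr x)

end Policy

lemma exp_neg_inv_pow_mul_pow_four_le_one {τ K : ℝ} (hτ : 0 < τ) (hK : 1 ≤ K) {N : ℕ}
    (hN : 4 * τ * Real.logb 2 K ≤ N) : Real.exp (-1 / τ) ^ N * K ^ 4 ≤ 1 := by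
  have hlogK : 0 ≤ Real.log K := Real.log_nonneg hK
  have hlog_le_logb : Real.log K ≤ Real.logb 2 K := by
    rw [Real.logb, le_div_iff₀ (Real.log_pos one_lt_two)]
    nlinarith [Real.log_two_lt_d9]
  have hexponent : N * (-1 / τ) + 4 * Real.log K ≤ 0 := by
    rw [mul_div, mul_neg_one, neg_div, neg_add_nonpos_iff, le_div_iff₀ hτ]
    nlinarith
  calc Real.exp (-1 / τ) ^ N * K ^ 4
      = Real.exp (N * (-1 / τ) + 4 * Real.log K) := by
        rw [Real.exp_add, Real.exp_nat_mul, show (4 : ℝ) = (4 : ℕ) by norm_num,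
          Real.exp_nat_mul, Real.exp_log (by linarith)]
    _ ≤ 1 := Real.exp_le_one_iff.2 hexponent

lemma four_mul_exp_neg_inv_pow_div_le {τ K : ℝ} (hτ : 1 ≤ τ) (hK : 6 * τ ≤ K) {N : ℕ}
    (hN : 4 * τ * Real.logb 2 K ≤ N) :
    4 * Real.exp (-1 / τ) ^ N / (1 - Real.exp (-1 / τ)) ≤ 2 / K ^ 3 := by
  have hτ0 : 0 < τ := by linarith
  have hK0 : 0 < K := by linarith
  have hpow := exp_neg_inv_pow_mul_pow_four_le_one hτ0 (by linarith) hN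
  set q := Real.exp (-1 / τ)
  have hq : q * (1 / τ + 1) ≤ 1 := by
    calc q * (1 / τ + 1) ≤ q * Real.exp (1 / τ) :=
          mul_le_mul_of_nonneg_left (Real.add_one_le_exp _) (Real.exp_pos _).le
      _ = 1 := by rw [← Real.exp_add, neg_div, neg_add_cancel, Real.exp_zero]
  have hgap : 3 ≤ (1 - q) * K := by
    rw [mul_add, mul_one_div, div_add' _ _ _ hτ0.ne', div_le_one hτ0] at hq
    nlinarith
  have hq1 : 0 < 1 - q := by nlinarith
  rw [div_le_div_iff₀ hq1 (by positivity)]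
  nlinarith [pow_nonneg (Real.exp_pos (-1 / τ)).le N]

theorem stmt11_general (X A : Type*) [Fintype X] [DecidableEq X] [Fintype A]
    [Nonempty X]
    -- transition kernel
    (P : X → A → X → ℝ)
    (hPnn : ∀ x a x', 0 ≤ P x a x') (hPsum : ∀ x a, ∑ x', P x a x' = 1)
    -- reward in [0,1]
    (r : X → A → ℝ) (hr0 : ∀ x a, 0 ≤ r x a) (hr1 : ∀ x a, r x a ≤ 1)
    -- policies π and π'
    (π π' : X → A → ℝ)
    (hπnn : ∀ x a, 0 ≤ π x a) (hπsum : ∀ x, ∑ a, π x a = 1)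
    (hπ'nn : ∀ x a, 0 ≤ π' x a) (hπ'sum : ∀ x, ∑ a, π' x a = 1)
    -- induced transition matrices and rewards
    (Pπ Pπ' : Matrix X X ℝ)
    (hPπ : ∀ x x', Pπ x x' = ∑ a, π x a * P x a x')
    (hPπ' : ∀ x x', Pπ' x x' = ∑ a, π' x a * P x a x')
    (rπ rπ' : X → ℝ)
    (hrπ : ∀ x, rπ x = ∑ a, π x a * r x a)
    (hrπ' : ∀ x, rπ' x = ∑ a, π' x a * r x a)
    -- contraction condition with parameter τ for both chains
    (τ : ℝ) (hτ : 1 ≤ τ)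
    (hcontr : ∀ μ μ' : X → ℝ, (∀ x, 0 ≤ μ x) → (∑ x, μ x = 1) →
      (∀ x, 0 ≤ μ' x) → (∑ x, μ' x = 1) →
      ∑ x', |∑ x, (μ x - μ' x) * Pπ x x'| ≤ Real.exp (-1 / τ) * ∑ x, |μ x - μ' x|)
    (hcontr' : ∀ μ μ' : X → ℝ, (∀ x, 0 ≤ μ x) → (∑ x, μ x = 1) →
      (∀ x, 0 ≤ μ' x) → (∑ x, μ' x = 1) →
      ∑ x', |∑ x, (μ x - μ' x) * Pπ' x x'| ≤ Real.exp (-1 / τ) * ∑ x, |μ x - μ' x|)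
    -- stationary distributions and average rewards
    (μπ μπ' : X → ℝ)
    (hμnn : ∀ x, 0 ≤ μπ x) (hμsum : ∑ x, μπ x = 1)
    (hstat : ∀ x', ∑ x, μπ x * Pπ x x' = μπ x')
    (hμ'nn : ∀ x, 0 ≤ μπ' x) (hμ'sum : ∑ x, μπ' x = 1)
    (hstat' : ∀ x', ∑ x, μπ' x * Pπ' x x' = μπ' x')
    (lam lam' : ℝ)
    (hlam : lam = ∑ x, μπ x * rπ x) (hlam' : lam' = ∑ x, μπ' x * rπ' x)
    -- value functions
    (V V' : X → ℝ)
    (hV : ∀ x, V x = ∑' t : ℕ, ((Pπ ^ t).mulVec rπ x - lam))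
    (hV' : ∀ x, V' x = ∑' t : ℕ, ((Pπ' ^ t).mulVec rπ' x - lam'))
    -- truncation horizon and policy distance
    (K : ℕ) (hK : 6 * τ ≤ (K : ℝ))
    (N : ℕ) (hN : N = ⌈4 * τ * Real.logb 2 (K : ℝ)⌉₊)
    (Δ : ℝ)
    (hΔ : Δ = Finset.univ.sup' Finset.univ_nonempty
      (fun x : X => ∑ a, |π x a - π' x a|)) :
    ∀ x : X, |V x - V' x|
      ≤ ((N : ℝ) ^ 2 + (N : ℝ)) * Δ + (N : ℝ) * |lam - lam'| + 2 / (K : ℝ) ^ 3 := by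
  intro x
  obtain rfl : Pπ = policyMatrix P π := Matrix.ext hPπ
  obtain rfl : Pπ' = policyMatrix P π' := Matrix.ext hPπ'
  obtain rfl : rπ = policyReward r π := funext hrπ
  obtain rfl : rπ' = policyReward r π' := funext hrπ'
  have hP x a : P x a ∈ stdSimplex ℝ X := ⟨hPnn x a, hPsum x a⟩
  have hr x a : |r x a| ≤ 1 := abs_le.2 ⟨by linarith [hr0 x a], hr1 x a⟩
  have hπ x : π x ∈ stdSimplex ℝ A := ⟨hπnn x, hπsum x⟩
  have hπ' x : π' x ∈ stdSimplex ℝ A := ⟨hπ'nn x, hπ'sum x⟩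
  have hπΔ y : ∑ a, |π y a - π' y a| ≤ Δ :=
    hΔ ▸ le_sup' (fun y => ∑ a, |π y a - π' y a|) (mem_univ y)
  have hq1 : Real.exp (-1 / τ) < 1 := Real.exp_lt_one_iff.2 (by
    rw [neg_div, neg_lt_zero]; positivity)
  have hvalue := abs_averageRewardValue_sub_le
    (policyMatrix_mem_rowStochastic hP hπ) (policyMatrix_mem_rowStochastic hP hπ')
    (Real.exp_pos _).le hq1
    (fun μ hμ ν hν => hcontr μ ν hμ.1 hμ.2 hν.1 hν.2)
    (fun μ hμ ν hν => hcontr' μ ν hμ.1 hμ.2 hν.1 hν.2)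
    ⟨hμnn, hμsum⟩ ⟨hμ'nn, hμ'sum⟩ (funext hstat) (funext hstat')
    (abs_policyReward_le_one hr hπ) (abs_policyReward_le_one hr hπ')
    (fun y => (sum_abs_policyMatrix_sub_le hP y).trans (hπΔ y))
    (fun y => (abs_policyReward_sub_le hr y).trans (hπΔ y)) N x
  have hVx : |V x - V' x| ≤ (N : ℝ) ^ 2 * Δ + N * |lam - lam'|
      + 4 * Real.exp (-1 / τ) ^ N / (1 - Real.exp (-1 / τ)) := by
    rw [hV x, hV' x, hlam, hlam']
    exact hvalue
  have htail := four_mul_exp_neg_inv_pow_div_le hτ hK (hN ▸ Nat.le_ceil _)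
  have hNΔ : 0 ≤ (N : ℝ) * Δ :=
    mul_nonneg N.cast_nonneg ((sum_nonneg fun _ _ => abs_nonneg _).trans (hπΔ x))
  linarith

/-- Difference of average-reward value functions of two policies of a
uniformly fast-mixing MDP is controlled by the maximal per-state ℓ1-distance
between the policies. -/
theorem stmt11 (X A : Type*) [Fintype X] [DecidableEq X] [Fintype A]
    [Nonempty X] [Nonempty A]
    -- transition kernel
    (P : X → A → X → ℝ)
    (hPnn : ∀ x a x', 0 ≤ P x a x') (hPsum : ∀ x a, ∑ x', P x a x' = 1)
    -- reward in [0,1]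
    (r : X → A → ℝ) (hr0 : ∀ x a, 0 ≤ r x a) (hr1 : ∀ x a, r x a ≤ 1)
    -- policies π and π'
    (π π' : X → A → ℝ)
    (hπnn : ∀ x a, 0 ≤ π x a) (hπsum : ∀ x, ∑ a, π x a = 1)
    (hπ'nn : ∀ x a, 0 ≤ π' x a) (hπ'sum : ∀ x, ∑ a, π' x a = 1)
    -- induced transition matrices and rewards
    (Pπ Pπ' : Matrix X X ℝ)
    (hPπ : ∀ x x', Pπ x x' = ∑ a, π x a * P x a x')
    (hPπ' : ∀ x x', Pπ' x x' = ∑ a, π' x a * P x a x')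
    (rπ rπ' : X → ℝ)
    (hrπ : ∀ x, rπ x = ∑ a, π x a * r x a)
    (hrπ' : ∀ x, rπ' x = ∑ a, π' x a * r x a)
    -- contraction condition with parameter τ for both chains
    (τ : ℝ) (hτ : 1 ≤ τ)
    (hcontr : ∀ μ μ' : X → ℝ, (∀ x, 0 ≤ μ x) → (∑ x, μ x = 1) →
      (∀ x, 0 ≤ μ' x) → (∑ x, μ' x = 1) →
      ∑ x', |∑ x, (μ x - μ' x) * Pπ x x'| ≤ Real.exp (-1 / τ) * ∑ x, |μ x - μ' x|)
    (hcontr' : ∀ μ μ' : X → ℝ, (∀ x, 0 ≤ μ x) → (∑ x, μ x = 1) →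
      (∀ x, 0 ≤ μ' x) → (∑ x, μ' x = 1) →
      ∑ x', |∑ x, (μ x - μ' x) * Pπ' x x'| ≤ Real.exp (-1 / τ) * ∑ x, |μ x - μ' x|)
    -- stationary distributions and average rewards
    (μπ μπ' : X → ℝ)
    (hμnn : ∀ x, 0 ≤ μπ x) (hμsum : ∑ x, μπ x = 1)
    (hstat : ∀ x', ∑ x, μπ x * Pπ x x' = μπ x')
    (hμ'nn : ∀ x, 0 ≤ μπ' x) (hμ'sum : ∑ x, μπ' x = 1)
    (hstat' : ∀ x', ∑ x, μπ' x * Pπ' x x' = μπ' x')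
    (lam lam' : ℝ)
    (hlam : lam = ∑ x, μπ x * rπ x) (hlam' : lam' = ∑ x, μπ' x * rπ' x)
    -- value functions
    (V V' : X → ℝ)
    (hV : ∀ x, V x = ∑' t : ℕ, ((Pπ ^ t).mulVec rπ x - lam))
    (hV' : ∀ x, V' x = ∑' t : ℕ, ((Pπ' ^ t).mulVec rπ' x - lam'))
    -- truncation horizon and policy distance
    (K : ℕ) (hK : 6 * τ ≤ (K : ℝ))
    (N : ℕ) (hN : N = ⌈4 * τ * Real.logb 2 (K : ℝ)⌉₊)
    (Δ : ℝ)
    (hΔ : Δ = Finset.univ.sup' Finset.univ_nonempty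
      (fun x : X => ∑ a, |π x a - π' x a|)) :
    ∀ x : X, |V x - V' x|
      ≤ ((N : ℝ) ^ 2 + (N : ℝ)) * Δ + (N : ℝ) * |lam - lam'| + 2 / (K : ℝ) ^ 3 :=
  stmt11_general X A P hPnn hPsum r hr0 hr1 π π' hπnn hπsum hπ'nn hπ'sum Pπ Pπ' hPπ hPπ' rπ rπ' hrπ
    hrπ' τ hτ hcontr hcontr' μπ μπ' hμnn hμsum hstat hμ'nn hμ'sum hstat' lam lam' hlam hlam' V V' hV
    hV' K hK N hN Δ hΔ
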